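/- Let R₁ = 2x³ − 3xy² and R₂ = 3x²y − 4y³ in the polynomial ring ℚ[x,y], and let m = (x, y) be the ideal generated by x and y. Then m⁵ is contained in the ideal generated by R₁ and R₂; equivalently, every polynomial all of whose monomials have total degree at least 5 lies in (R₁, R₂). -/
import Mathlib


open MvPolynomial

noncomputable section

/-- The ideal (R₁, R₂) ⊆ ℚ[x,y] with R₁ = 2x³ − 3xy² and R₂ = 3x²y − 4y³
(x = X 0, y = X 1). -/
def relIdeal : Ideal (MvPolynomial (Fin 2) ℚ) :=
  Ideal.span {2 * X 0 ^ 3 - 3 * X 0 * X 1 ^ 2, 3 * X 0 ^ 2 * X 1 - 4 * X 1 ^ 3}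

/-- The maximal ideal m = (x, y). -/
def mIdeal : Ideal (MvPolynomial (Fin 2) ℚ) := Ideal.span {X 0, X 1}

lemma mon5 (i j : ℕ) (h : i + j = 5) :
    X 0 ^ i * X 1 ^ j ∈ relIdeal := by
  have hi : i ≤ 5 := by omega
  rw [relIdeal, Ideal.mem_span_pair]
  interval_cases i
  · have : j = 5 := by omega
    subst this
    refine ⟨C (1/4 : ℚ) * (-9 * X 0 * X 1), C (1/4 : ℚ) * (6 * X 0 ^ 2 - X 1 ^ 2), ?_⟩
    have hc : (C (1/4 : ℚ) * 4 : MvPolynomial (Fin 2) ℚ) = 1 := by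
      have h : ((4 : MvPolynomial (Fin 2) ℚ)) = C (4 : ℚ) := by rw [map_ofNat]
      rw [h, ← C_mul]; norm_num
    linear_combination (X 0 ^ 0 * X 1 ^ 5) * hc
  · have : j = 4 := by omega
    subst this
    exact ⟨-3 * X 1 ^ 2, 2 * X 0 * X 1, by ring⟩
  · have : j = 3 := by omega
    subst this
    exact ⟨-3 * X 0 * X 1, 2 * X 0 ^ 2, by ring⟩
  · have : j = 2 := by omega
    subst this
    exact ⟨-4 * X 1 ^ 2, 3 * X 0 * X 1, by ring⟩
  · have : j = 1 := by omega
    subst this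
    exact ⟨-4 * X 0 * X 1, 3 * X 0 ^ 2, by ring⟩
  · have : j = 0 := by omega
    subst this
    refine ⟨C (1/2 : ℚ) * (X 0 ^ 2 - 12 * X 1 ^ 2), C (1/2 : ℚ) * (9 * X 0 * X 1), ?_⟩
    have hc : (C (1/2 : ℚ) * 2 : MvPolynomial (Fin 2) ℚ) = 1 := by
      have h : ((2 : MvPolynomial (Fin 2) ℚ)) = C (2 : ℚ) := by rw [map_ofNat]
      rw [h, ← C_mul]; norm_num
    linear_combination (X 0 ^ 5 * X 1 ^ 0) * hc

lemma monGE (i j : ℕ) (h : 5 ≤ i + j) :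
    X 0 ^ i * X 1 ^ j ∈ relIdeal := by
  obtain ⟨i', j', a, b, h5, hi, hj⟩ :
      ∃ i' j' a b, i' + j' = 5 ∧ i = a + i' ∧ j = b + j' :=
    ⟨min i 5, 5 - min i 5, i - min i 5, j - (5 - min i 5), by omega, by omega, by omega⟩
  subst hi hj
  rw [pow_add, pow_add, mul_mul_mul_comm]
  exact Ideal.mul_mem_left _ _ (mon5 _ _ h5)

lemma part2 (p : MvPolynomial (Fin 2) ℚ)
    (h : ∀ d ∈ p.support, 5 ≤ d.sum fun _ e => e) : p ∈ relIdeal := by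
  rw [p.as_sum]
  refine Ideal.sum_mem _ fun d hd => ?_
  have hdeg : 5 ≤ d 0 + d 1 := by
    have := h d hd
    rwa [Finsupp.sum_fintype _ _ (fun i => rfl), Fin.sum_univ_two] at this
  have heq : (monomial d) (coeff d p) = C (coeff d p) * (X 0 ^ d 0 * X 1 ^ d 1) := by
    rw [monomial_eq]
    congr 1
    rw [Finsupp.prod_fintype _ _ (fun i => pow_zero _), Fin.prod_univ_two]
  rw [heq]
  exact Ideal.mul_mem_left _ _ (monGE _ _ hdeg)

lemma deg1 (a : MvPolynomial (Fin 2) ℚ) (ha : a ∈ mIdeal) :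
    ∀ d ∈ a.support, 1 ≤ d.sum fun _ e => e := by
  rw [mIdeal, Ideal.mem_span_pair] at ha
  obtain ⟨u, v, rfl⟩ := ha
  intro d hd
  have hd' := Finset.mem_of_subset (MvPolynomial.support_add) hd
  rw [Finset.mem_union] at hd'
  rcases hd' with hd' | hd' <;>
  · have := MvPolynomial.support_mul _ _ hd'
    rw [Finset.mem_add] at this
    obtain ⟨d1, h1, d2, h2, rfl⟩ := this
    rw [MvPolynomial.support_X, Finset.mem_singleton] at h2
    subst h2
    rw [Finsupp.sum_add_index' (fun _ => rfl) (fun _ _ _ => rfl)]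
    simp [Finsupp.sum_single_index]

lemma degLem : ∀ n : ℕ, ∀ p ∈ mIdeal ^ n, ∀ d ∈ p.support, n ≤ d.sum fun _ e => e := by
  intro n
  induction n with
  | zero => intro p _ d _; exact Nat.zero_le _
  | succ n ih =>
    intro p hp
    rw [pow_succ] at hp
    refine Submodule.mul_induction_on hp ?_ ?_
    · intro m hm a ha d hd
      have := MvPolynomial.support_mul _ _ hd
      rw [Finset.mem_add] at this
      obtain ⟨d1, h1, d2, h2, rfl⟩ := this
      rw [Finsupp.sum_add_index' (fun _ => rfl) (fun _ _ _ => rfl)]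
      have := ih m hm d1 h1
      have := deg1 a ha d2 h2
      omega
    · intro x y hx hy d hd
      have := Finset.mem_of_subset (MvPolynomial.support_add) hd
      rw [Finset.mem_union] at this
      rcases this with h | h
      · exact hx d h
      · exact hy d h

/-- m⁵ ⊆ (R₁, R₂); equivalently, every polynomial all of whose monomials have
total degree at least 5 lies in (R₁, R₂). -/
theorem m_pow_five_le_relIdeal :
    mIdeal ^ 5 ≤ relIdeal ∧
    ∀ p : MvPolynomial (Fin 2) ℚ,
      (∀ d ∈ p.support, 5 ≤ d.sum fun _ e => e) → p ∈ relIdeal := by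
  refine ⟨fun p hp => part2 p (degLem 5 p hp), part2⟩
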